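/- (Horowitz–Manski-type bounds for a mixture component.) Let W, W_0, …, W_K be integrable real random variables and γ_0, …, γ_K ≥ 0 with Σ_{k=0}^{K} γ_k = 1, such that the CDFs satisfy F_W(w) = Σ_{k=0}^{K} γ_k · F_{W_k}(w) for all w ∈ ℝ. Then for every k ∈ {0,…,K} with γ_k > 0: E[F_W^{-1}(U) | U ≤ γ_k] ≤ E[W_k] ≤ E[F_W^{-1}(U) | U ≥ 1 − γ_k]. -/

import Mathlib

open MeasureTheory ProbabilityTheory

/-- CDF of a random variable `W` under a measure `μ`. -/
noncomputable def cdfOf {Ω : Type*} [MeasurableSpace Ω] (μ : MeasureTheory.Measure Ω)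
    (W : Ω → ℝ) (w : ℝ) : ℝ :=
  (μ {ω | W ω ≤ w}).toReal

/-- Quantile function `F⁻¹(u) = inf {w : F(w) ≥ u}`. -/
noncomputable def quantileFn (F : ℝ → ℝ) (u : ℝ) : ℝ := sInf {w | u ≤ F w}

/-- Lower truncated mean `E[F⁻¹(U) | U ≤ γ]` for `U` uniform on `[0,1]`,
written as `γ⁻¹ ∫_{(0,γ]} F⁻¹(u) du`. -/
noncomputable def lowerTrunc (F : ℝ → ℝ) (γ : ℝ) : ℝ :=
  γ⁻¹ * ∫ u in Set.Ioc (0 : ℝ) γ, quantileFn F u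

/-- Upper truncated mean `E[F⁻¹(U) | U ≥ 1 − γ]` for `U` uniform on `[0,1]`,
written as `γ⁻¹ ∫_{[1−γ,1]} F⁻¹(u) du`. -/
noncomputable def upperTrunc (F : ℝ → ℝ) (γ : ℝ) : ℝ :=
  γ⁻¹ * ∫ u in Set.Ico (1 - γ) (1 : ℝ), quantileFn F u

/-!
The quantile function `Q_F` of a distribution function `F` transports the uniform law on `(0,1)` to
the law with cdf `F`, so means are integrals of quantiles over `(0,1)`. The mixture identity gives
`γ_k F_k ≤ F ≤ γ_k F_k + (1 - γ_k)`, which translates into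
`Q_F (γ_k u) ≤ Q_{F_k} u ≤ Q_F (γ_k u + 1 - γ_k)`; integrating over `u ∈ (0,1)` and substituting
`γ_k u` resp. `γ_k u + 1 - γ_k` yields the two truncated means.
-/

open Set

lemma cdfOf_nonneg {Ω : Type*} [MeasurableSpace Ω] (P : Measure Ω) (X : Ω → ℝ) (w : ℝ) :
    0 ≤ cdfOf P X w :=
  ENNReal.toReal_nonneg

lemma cdfOf_le_one {Ω : Type*} [MeasurableSpace Ω] (P : Measure Ω) [IsProbabilityMeasure P]
    (X : Ω → ℝ) (w : ℝ) : cdfOf P X w ≤ 1 :=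
  measureReal_le_one

lemma cdfOf_eq_cdf_map {Ω : Type*} [MeasurableSpace Ω] (P : Measure Ω) [IsProbabilityMeasure P]
    {X : Ω → ℝ} (hX : Measurable X) : cdfOf P X = cdf (P.map X) := by
  have := Measure.isProbabilityMeasure_map (μ := P) hX.aemeasurable
  funext w
  rw [cdf_eq_real, measureReal_def, Measure.map_apply hX measurableSet_Iic]
  rfl

lemma quantileFn_le_quantileFn {F G : ℝ → ℝ} {u v : ℝ} (hF : BddBelow {w | u ≤ F w})
    (hG : {w | v ≤ G w}.Nonempty) (h : ∀ w, v ≤ G w → u ≤ F w) :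
    quantileFn F u ≤ quantileFn G v :=
  csInf_le_csInf hF hG h

section QuantileOfCdf

variable (μ : Measure ℝ)

lemma bddBelow_setOf_le_cdf {u : ℝ} (hu : 0 < u) : BddBelow {w | u ≤ cdf μ w} := by
  obtain ⟨w₀, hw₀⟩ := ((tendsto_cdf_atBot μ).eventually_lt_const hu).exists
  refine ⟨w₀, fun w hw => le_of_not_gt fun hlt => ?_⟩
  exact (hw.trans (monotone_cdf μ hlt.le)).not_gt hw₀

lemma nonempty_setOf_le_cdf {u : ℝ} (hu : u < 1) : {w | u ≤ cdf μ w}.Nonempty :=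
  let ⟨w, hw⟩ := ((tendsto_cdf_atTop μ).eventually_const_lt hu).exists
  ⟨w, hw.le⟩

lemma le_cdf_quantileFn {u : ℝ} (hu : u ∈ Ioo 0 1) : u ≤ cdf μ (quantileFn (cdf μ) u) := by
  have h_right : ∀ w ∈ Ioi (quantileFn (cdf μ) u), u ≤ cdf μ w := fun w hw =>
    let ⟨_, hs, hsw⟩ :=
      (csInf_lt_iff (bddBelow_setOf_le_cdf μ hu.1) (nonempty_setOf_le_cdf μ hu.2)).1 hw
    hs.trans (monotone_cdf μ hsw.le)
  exact ge_of_tendsto (((cdf μ).right_continuous _).mono Ioi_subset_Ici_self).tendsto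
    (eventually_nhdsWithin_of_forall h_right)

lemma quantileFn_cdf_le_iff {u x : ℝ} (hu : u ∈ Ioo 0 1) :
    quantileFn (cdf μ) u ≤ x ↔ u ≤ cdf μ x :=
  ⟨fun h => (le_cdf_quantileFn μ hu).trans (monotone_cdf μ h),
    fun h => csInf_le (bddBelow_setOf_le_cdf μ hu.1) h⟩

lemma monotoneOn_quantileFn_cdf : MonotoneOn (quantileFn (cdf μ)) (Ioo 0 1) :=
  fun _ ha _ hb hab => quantileFn_le_quantileFn (bddBelow_setOf_le_cdf μ ha.1)
    (nonempty_setOf_le_cdf μ hb.2) fun _ hw => hab.trans hw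

lemma aemeasurable_quantileFn_cdf :
    AEMeasurable (quantileFn (cdf μ)) (volume.restrict (Ioo 0 1)) :=
  aemeasurable_restrict_of_monotoneOn measurableSet_Ioo (monotoneOn_quantileFn_cdf μ)

variable [IsProbabilityMeasure μ]

theorem map_quantileFn_cdf : (volume.restrict (Ioo 0 1)).map (quantileFn (cdf μ)) = μ := by
  refine Measure.ext_of_Iic _ _ fun x => ?_
  rw [Measure.map_apply_of_aemeasurable (aemeasurable_quantileFn_cdf μ) measurableSet_Iic,
    Measure.restrict_apply' measurableSet_Ioo, ← ofReal_cdf]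
  have h_sub : Ioo 0 (cdf μ x) ⊆ quantileFn (cdf μ) ⁻¹' Iic x ∩ Ioo 0 1 := fun u hu =>
    have hu' : u ∈ Ioo 0 1 := ⟨hu.1, hu.2.trans_le (cdf_le_one μ x)⟩
    ⟨(quantileFn_cdf_le_iff μ hu').2 hu.2.le, hu'⟩
  have h_sup : quantileFn (cdf μ) ⁻¹' Iic x ∩ Ioo 0 1 ⊆ Ioc 0 (cdf μ x) := fun u ⟨hux, hu⟩ =>
    ⟨hu.1, (quantileFn_cdf_le_iff μ hu).1 hux⟩
  refine le_antisymm ((measure_mono h_sup).trans_eq ?_) (le_of_eq_of_le ?_ (measure_mono h_sub))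
  · rw [Real.volume_Ioc, sub_zero]
  · rw [Real.volume_Ioo, sub_zero]

lemma integrableOn_quantileFn_cdf (h : Integrable id μ) :
    IntegrableOn (quantileFn (cdf μ)) (Icc 0 1) := by
  rw [integrableOn_Icc_iff_integrableOn_Ioo]
  rw [← map_quantileFn_cdf μ] at h
  exact (integrable_map_measure aestronglyMeasurable_id (aemeasurable_quantileFn_cdf μ)).1 h

theorem setIntegral_quantileFn_cdf : ∫ u in Ioo 0 1, quantileFn (cdf μ) u = ∫ x, x ∂μ := by
  conv_rhs => rw [← map_quantileFn_cdf μ]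
  exact (integral_map (aemeasurable_quantileFn_cdf μ) aestronglyMeasurable_id).symm

end QuantileOfCdf

lemma setIntegral_Ioo_comp_mul_add (f : ℝ → ℝ) {a : ℝ} (ha : 0 < a) (b : ℝ) :
    ∫ x in Ioo 0 1, f (a * x + b) = a⁻¹ * ∫ u in Ioc b (a + b), f u := by
  rw [setIntegral_congr_set Ioo_ae_eq_Ioc, ← intervalIntegral.integral_of_le zero_le_one,
    intervalIntegral.integral_comp_mul_add f ha.ne', mul_zero, zero_add, mul_one,
    intervalIntegral.integral_of_le (by linarith), smul_eq_mul]

lemma integrableOn_Ioo_comp_mul_add {f : ℝ → ℝ} {a b : ℝ} (hf : IntegrableOn f (Ioc b (a + b)))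
    (ha : 0 < a) : IntegrableOn (fun x => f (a * x + b)) (Ioo 0 1) := by
  have hf' := ((intervalIntegrable_iff_integrableOn_Ioc_of_le (by linarith)).2 hf).comp_add_right b
  have h := hf'.comp_mul_left (c := a)
  rw [sub_self, zero_div, add_sub_cancel_right, div_self ha.ne'] at h
  exact (intervalIntegrable_iff_integrableOn_Ioo_of_le zero_le_one).1 h

section HorowitzManski

variable {μ ν : Measure ℝ} [IsProbabilityMeasure μ] [IsProbabilityMeasure ν] {γ : ℝ}

theorem lowerTrunc_cdf_le_integral (hμ : Integrable id μ) (hν : Integrable id ν) (hγ₀ : 0 < γ)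
    (hγ₁ : γ ≤ 1) (h : ∀ w, γ * cdf ν w ≤ cdf μ w) : lowerTrunc (cdf μ) γ ≤ ∫ x, x ∂ν := by
  have h_subst := setIntegral_Ioo_comp_mul_add (quantileFn (cdf μ)) hγ₀ 0
  simp only [add_zero] at h_subst
  rw [lowerTrunc, ← h_subst, ← setIntegral_quantileFn_cdf ν]
  refine setIntegral_mono_on ?_ ((integrableOn_quantileFn_cdf ν hν).mono_set Ioo_subset_Icc_self)
    measurableSet_Ioo fun u hu => ?_
  · have hQ : IntegrableOn (quantileFn (cdf μ)) (Ioc 0 (γ + 0)) := by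
      rw [add_zero]
      exact (integrableOn_quantileFn_cdf μ hμ).mono_set
        (Ioc_subset_Icc_self.trans (Icc_subset_Icc_right hγ₁))
    simpa only [add_zero] using integrableOn_Ioo_comp_mul_add hQ hγ₀
  · exact quantileFn_le_quantileFn (bddBelow_setOf_le_cdf μ (mul_pos hγ₀ hu.1))
      (nonempty_setOf_le_cdf ν hu.2) fun w hw =>
        (mul_le_mul_of_nonneg_left hw hγ₀.le).trans (h w)

theorem integral_le_upperTrunc_cdf (hμ : Integrable id μ) (hν : Integrable id ν) (hγ₀ : 0 < γ)
    (hγ₁ : γ ≤ 1) (h : ∀ w, cdf μ w ≤ γ * cdf ν w + (1 - γ)) :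
    ∫ x, x ∂ν ≤ upperTrunc (cdf μ) γ := by
  have h_subst := setIntegral_Ioo_comp_mul_add (quantileFn (cdf μ)) hγ₀ (1 - γ)
  rw [add_sub_cancel] at h_subst
  rw [upperTrunc, setIntegral_congr_set Ico_ae_eq_Ioc, ← h_subst, ← setIntegral_quantileFn_cdf ν]
  refine setIntegral_mono_on ((integrableOn_quantileFn_cdf ν hν).mono_set Ioo_subset_Icc_self) ?_
    measurableSet_Ioo fun u hu => ?_
  · have hQ : IntegrableOn (quantileFn (cdf μ)) (Ioc (1 - γ) (γ + (1 - γ))) := by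
      rw [add_sub_cancel]
      exact (integrableOn_quantileFn_cdf μ hμ).mono_set
        (Ioc_subset_Icc_self.trans (Icc_subset_Icc_left (sub_nonneg.2 hγ₁)))
    exact integrableOn_Ioo_comp_mul_add hQ hγ₀
  · have h_lt : γ * u + (1 - γ) < 1 := by nlinarith [hu.2]
    exact quantileFn_le_quantileFn (bddBelow_setOf_le_cdf ν hu.1) (nonempty_setOf_le_cdf μ h_lt)
      fun w hw => le_of_mul_le_mul_left (by linarith [h w]) hγ₀

end HorowitzManski

lemma Finset.mul_le_sum_mul {ι : Type*} {s : Finset ι} {γ c : ι → ℝ} {k : ι} (hk : k ∈ s)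
    (hγ : ∀ j ∈ s, 0 ≤ γ j) (hc : ∀ j ∈ s, 0 ≤ c j) : γ k * c k ≤ ∑ j ∈ s, γ j * c j :=
  Finset.single_le_sum (fun j hj => mul_nonneg (hγ j hj) (hc j hj)) hk

lemma Finset.sum_mul_le_mul_add_one_sub {ι : Type*} {s : Finset ι} {γ c : ι → ℝ} {k : ι}
    (hk : k ∈ s) (hγ : ∀ j ∈ s, 0 ≤ γ j) (hsum : ∑ j ∈ s, γ j = 1) (hc : ∀ j ∈ s, c j ≤ 1) :
    ∑ j ∈ s, γ j * c j ≤ γ k * c k + (1 - γ k) := by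
  have h := Finset.mul_le_sum_mul (c := fun j => 1 - c j) hk hγ fun j hj => sub_nonneg.2 (hc j hj)
  simp only [mul_one_sub, Finset.sum_sub_distrib, hsum] at h
  linarith

theorem horowitz_manski_mixture_component_bounds
    {Ω : Type*} [MeasurableSpace Ω] (P : Measure Ω) [IsProbabilityMeasure P]
    (K : ℕ) (W : Ω → ℝ) (Wk : ℕ → Ω → ℝ) (γ : ℕ → ℝ)
    (hWm : Measurable W) (hWkm : ∀ k ≤ K, Measurable (Wk k))
    (hW : Integrable W P) (hWk : ∀ k ≤ K, Integrable (Wk k) P)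
    (hγ : ∀ k ≤ K, 0 ≤ γ k) (hsum : ∑ k ∈ Finset.range (K + 1), γ k = 1)
    (hmix : ∀ w, cdfOf P W w = ∑ k ∈ Finset.range (K + 1), γ k * cdfOf P (Wk k) w)
    (k : ℕ) (hk : k ≤ K) (hγk : 0 < γ k) :
    lowerTrunc (cdfOf P W) (γ k) ≤ ∫ ω, Wk k ω ∂P ∧
      ∫ ω, Wk k ω ∂P ≤ upperTrunc (cdfOf P W) (γ k) := by
  have hk' : k ∈ Finset.range (K + 1) := Finset.mem_range_succ_iff.2 hk
  have hγ' : ∀ j ∈ Finset.range (K + 1), 0 ≤ γ j := fun j hj => hγ j (Finset.mem_range_succ_iff.1 hj)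
  have := Measure.isProbabilityMeasure_map (μ := P) hWm.aemeasurable
  have := Measure.isProbabilityMeasure_map (μ := P) (hWkm k hk).aemeasurable
  have h_cdf : ∀ w, cdf (P.map W) w = ∑ j ∈ Finset.range (K + 1), γ j * cdfOf P (Wk j) w ∧
      cdfOf P (Wk k) w = cdf (P.map (Wk k)) w := fun w =>
    ⟨by rw [← cdfOf_eq_cdf_map P hWm, hmix], by rw [cdfOf_eq_cdf_map P (hWkm k hk)]⟩
  have hγ₁ : γ k ≤ 1 := hsum ▸ Finset.single_le_sum hγ' hk'
  have hμ : Integrable id (P.map W) :=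
    (integrable_map_measure aestronglyMeasurable_id hWm.aemeasurable).2 hW
  have hν : Integrable id (P.map (Wk k)) :=
    (integrable_map_measure aestronglyMeasurable_id (hWkm k hk).aemeasurable).2 (hWk k hk)
  have h_mean : ∫ x, x ∂(P.map (Wk k)) = ∫ ω, Wk k ω ∂P :=
    integral_map (hWkm k hk).aemeasurable aestronglyMeasurable_id
  rw [cdfOf_eq_cdf_map P hWm, ← h_mean]
  refine ⟨lowerTrunc_cdf_le_integral hμ hν hγk hγ₁ fun w => ?_,
    integral_le_upperTrunc_cdf hμ hν hγk hγ₁ fun w => ?_⟩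
  · rw [(h_cdf w).1, ← (h_cdf w).2]
    exact Finset.mul_le_sum_mul hk' hγ' fun j _ => cdfOf_nonneg P _ w
  · rw [(h_cdf w).1, ← (h_cdf w).2]
    exact Finset.sum_mul_le_mul_add_one_sub hk' hγ' hsum fun j _ => cdfOf_le_one P _ w
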